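/- arXiv:1304.0004 — 3 statements merged into one kernel-verified Lean document; each statement's English description precedes it below -/
import Mathlib

section
/- Let A be an m×n real matrix such that every set of 2k columns of A is linearly independent (where 2k ≤ m ≤ n). If x̃ ∈ ℝⁿ has at most k nonzero entries, then x̃ is the unique vector with at most k nonzero entries satisfying A x = A x̃. -/
/-!
If `A x = A x̃` with `x, x̃` both `k`-sparse, then `d = x - x̃` is `2k`-sparse and `A d = 0`.
Its support lies in some set `S` of exactly `2k` columns, and `A d = 0` is then a vanishing
linear combination of the linearly independent columns indexed by `S`, so `d = 0`.
-/

open Finset Matrix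

section

variable {R m n : Type*} [Fintype n]

theorem card_filter_sub_ne_zero_le [AddGroup R] [DecidableEq R] (x y : n → R) :
    #(univ.filter fun i => (x - y) i ≠ 0) ≤
      #(univ.filter fun i => x i ≠ 0) + #(univ.filter fun i => y i ≠ 0) := by
  classical
  refine (card_le_card fun i => ?_).trans (card_union_le _ _)
  simp only [mem_filter, mem_univ, true_and, mem_union, Pi.sub_apply]
  contrapose!
  rintro ⟨hx, hy⟩
  rw [hx, hy, sub_zero]

variable [CommRing R]

theorem Matrix.eq_zero_of_mulVec_eq_zero_of_linearIndepOn {A : Matrix m n R} {S : Finset n}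
    (hS : LinearIndepOn R Aᵀ S) {d : n → R} (hdS : ∀ j ∉ S, d j = 0) (hAd : A *ᵥ d = 0) :
    d = 0 := by
  have hsum : ∑ j ∈ S, d j • Aᵀ j = 0 := by
    rw [← hAd, mulVec_eq_sum, sum_subset S.subset_univ fun j _ hj => by rw [hdS j hj, zero_smul]]
    simp only [op_smul_eq_smul]
  funext j
  by_cases hj : j ∈ S
  · exact linearIndepOn_finset_iff.mp hS d hsum j hj
  · exact hdS j hj

theorem Matrix.eq_zero_of_mulVec_eq_zero_of_card_support_le [DecidableEq R] {A : Matrix m n R}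
    {s : ℕ} (hs : s ≤ Fintype.card n)
    (hcols : ∀ S : Finset n, #S = s → LinearIndependent R fun j : S => Aᵀ j.1)
    {d : n → R} (hd : #(univ.filter fun i => d i ≠ 0) ≤ s) (hAd : A *ᵥ d = 0) : d = 0 := by
  obtain ⟨S, hsuppS, -, hS⟩ := exists_subsuperset_card_eq (subset_univ _) hd hs
  refine eq_zero_of_mulVec_eq_zero_of_linearIndepOn (hcols S hS) (fun j hj => ?_) hAd
  by_contra hdj
  exact hj (hsuppS (by simpa using hdj))

end

/-- If every set of 2k columns of A is linearly independent
(2k ≤ m ≤ n), and x̃ has at most k nonzero entries, then x̃ is the unique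
vector with at most k nonzero entries satisfying A x = A x̃. -/
theorem stmt0 (m n k : ℕ) (hkm : 2 * k ≤ m) (hmn : m ≤ n)
    (A : Matrix (Fin m) (Fin n) ℝ)
    (hcols : ∀ S : Finset (Fin n), S.card = 2 * k →
      LinearIndependent ℝ (fun j : S => (A.transpose j.1)))
    (xt : Fin n → ℝ)
    (hxt : (Finset.univ.filter (fun i => xt i ≠ 0)).card ≤ k) :
    ∀ x : Fin n → ℝ,
      (Finset.univ.filter (fun i => x i ≠ 0)).card ≤ k →
      A.mulVec x = A.mulVec xt → x = xt := by
  intro x hx hAx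
  have hAd : A *ᵥ (x - xt) = 0 := by rw [mulVec_sub, hAx, sub_self]
  have hd : #(univ.filter fun i => (x - xt) i ≠ 0) ≤ 2 * k :=
    (card_filter_sub_ne_zero_le x xt).trans (by omega)
  have hn : 2 * k ≤ Fintype.card (Fin n) := by rw [Fintype.card_fin]; omega
  exact sub_eq_zero.mp (eq_zero_of_mulVec_eq_zero_of_card_support_le hn hcols hd hAd)
end

section
/- For every β ∈ (0,1) there exists α ∈ (β,1) satisfying (1−β)·√(2/π)·exp(−(erfinv((1−α)/(1−β)))²)/α − √2·erfinv((1−α)/(1−β)) = 0, where erfinv is the inverse of the error function erf on (0,1). -/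
open Real

noncomputable def erf (y : ℝ) : ℝ := (2 / Real.sqrt π) * ∫ t in (0:ℝ)..y, Real.exp (-(t ^ 2))

/-!
Substitute `c = erfinv ((1 - α) / (1 - β))`, i.e. `α = 1 - (1 - β) erf c`. Since `erf` is
increasing and maps `(0, ∞)` into `(0, 1)`, every `c > 0` gives `α ∈ (β, 1)` with
`erfinv (erf c) = c`, and the equation becomes `F c = √2 c` with `F c = (1 - β) √(2/π) e^{-c²} / (1 - (1 - β) erf c)`.
Now `F` is continuous, `F 0 > 0` and `F ≤ (1 - β) √(2/π) / β` because the denominator is at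
least `β`, so the line `√2 c` must cross `F` at some `c > 0`.
-/

lemma integrable_exp_neg_sq : MeasureTheory.Integrable (fun t : ℝ => exp (-(t ^ 2))) := by
  simpa using integrable_exp_neg_mul_sq (b := 1) one_pos

lemma continuous_erf : Continuous erf :=
  continuous_const.mul (integrable_exp_neg_sq.continuous_primitive 0)

lemma strictMono_erf : StrictMono erf := by
  intro a b hab
  have hint : ∀ x y : ℝ, IntervalIntegrable (fun t : ℝ => exp (-(t ^ 2))) MeasureTheory.volume x y :=
    fun _ _ => integrable_exp_neg_sq.intervalIntegrable
  have hpos : 0 < ∫ t in a..b, exp (-(t ^ 2)) :=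
    intervalIntegral.intervalIntegral_pos_of_pos (hint a b) (fun _ => exp_pos _) hab
  have hsplit := intervalIntegral.integral_add_adjacent_intervals (hint 0 a) (hint a b)
  unfold erf
  gcongr
  linarith

@[simp] lemma erf_zero : erf 0 = 0 := by simp [erf]

lemma erf_pos {c : ℝ} (hc : 0 < c) : 0 < erf c := erf_zero ▸ strictMono_erf hc

lemma erf_le_one {c : ℝ} (hc : 0 ≤ c) : erf c ≤ 1 := by
  have hhalf : ∫ t in Set.Ioi (0:ℝ), exp (-(t ^ 2)) = √π / 2 := by
    simpa using integral_gaussian_Ioi 1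
  have hle : ∫ t in (0:ℝ)..c, exp (-(t ^ 2)) ≤ √π / 2 := by
    rw [← hhalf, intervalIntegral.integral_of_le hc]
    exact MeasureTheory.setIntegral_mono_set integrable_exp_neg_sq.integrableOn
      (.of_forall fun _ => (exp_pos _).le) (.of_forall fun _ hx => hx.1)
  have hπ : 0 < √π := sqrt_pos.mpr pi_pos
  calc erf c ≤ 2 / √π * (√π / 2) := by unfold erf; gcongr
    _ = 1 := by field_simp

lemma erf_lt_one (c : ℝ) : erf c < 1 :=
  (strictMono_erf (lt_max_of_lt_left (lt_add_one c))).trans_le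
    (erf_le_one (by positivity : (0:ℝ) ≤ max (c + 1) 0))

lemma exists_pos_eq_mul_self_of_le {f : ℝ → ℝ} {k M : ℝ} (hf : Continuous f) (hf0 : 0 < f 0)
    (hfM : ∀ x, 0 ≤ x → f x ≤ M) (hk : 0 < k) : ∃ c, 0 < c ∧ f c = k * c := by
  set C := |M| / k + 1 with hCdef
  have hC : 0 < C := by positivity
  have hgC : f C - k * C < 0 := by
    have : k * C = |M| + k := by rw [hCdef]; field_simp
    linarith [hfM C hC.le, le_abs_self M]
  have hg : Continuous fun x => f x - k * x := by fun_prop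
  obtain ⟨c, hc, hfc⟩ := intermediate_value_Icc' hC.le hg.continuousOn
    (show (0:ℝ) ∈ Set.Icc (f C - k * C) (f 0 - k * 0) by constructor <;> linarith)
  refine ⟨c, hc.1.lt_of_ne ?_, sub_eq_zero.mp hfc⟩
  rintro rfl
  linarith [hfc]

lemma exists_pos_erf_root {β : ℝ} (hβ : β ∈ Set.Ioo (0:ℝ) 1) :
    ∃ c, 0 < c ∧ (1 - β) * √(2 / π) * exp (-c ^ 2) / (1 - (1 - β) * erf c) = √2 * c := by
  obtain ⟨hβ0, hβ1⟩ := hβ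
  have hden : ∀ c, β ≤ 1 - (1 - β) * erf c := fun c => by nlinarith [erf_lt_one c]
  refine exists_pos_eq_mul_self_of_le (M := (1 - β) * √(2 / π) / β) ?_ ?_ ?_ (by positivity)
  · exact Continuous.div (by fun_prop) (continuous_const.sub (continuous_const.mul continuous_erf))
      fun c => (hβ0.trans_le (hden c)).ne'
  · simp only [erf_zero, mul_zero, sub_zero, div_one]; positivity
  · intro c _
    have hexp : exp (-c ^ 2) ≤ 1 := exp_le_one_iff.mpr (by nlinarith)
    exact div_le_div₀ (by positivity) (mul_le_of_le_one_right (by positivity) hexp) hβ0 (hden c)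

/-- For every β ∈ (0,1) there exists α ∈ (β,1) solving the
fundamental ℓ1-performance equation, where erfinv is the inverse of erf on (0,1). -/
theorem stmt8 (β : ℝ) (hβ : β ∈ Set.Ioo (0:ℝ) 1)
    (erfinv : ℝ → ℝ)
    (herfinv : ∀ t ∈ Set.Ioo (0:ℝ) 1, 0 < erfinv t ∧ erf (erfinv t) = t) :
    ∃ α : ℝ, α ∈ Set.Ioo β 1 ∧
      (1 - β) * Real.sqrt (2 / π) *
          Real.exp (-(erfinv ((1 - α) / (1 - β))) ^ 2) / α -
        Real.sqrt 2 * erfinv ((1 - α) / (1 - β)) = 0 := by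
  obtain ⟨c, hc, hroot⟩ := exists_pos_erf_root hβ
  have hβ1 : 0 < 1 - β := sub_pos.mpr hβ.2
  have herf : erf c ∈ Set.Ioo (0:ℝ) 1 := ⟨erf_pos hc, erf_lt_one c⟩
  have hα : (1 - (1 - (1 - β) * erf c)) / (1 - β) = erf c := by field_simp; ring
  have hinv : erfinv (erf c) = c := strictMono_erf.injective (herfinv _ herf).2
  refine ⟨1 - (1 - β) * erf c, ⟨?_, ?_⟩, ?_⟩
  · nlinarith [herf.2]
  · nlinarith [herf.1]
  · rw [hα, hinv, hroot, sub_self]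
end

section
/- Let A be an m×n real matrix and let x̃ ∈ ℝⁿ have support S = {i : x̃ᵢ ≠ 0}. Suppose that for every nonzero w in the null space of A, |Σ_{i∈S} sign(x̃ᵢ)·wᵢ| < Σ_{i∉S} |wᵢ|. Then x̃ is the unique minimizer of ‖x‖₁ subject to A x = A x̃. -/
/-!
Put `w = x - x̃`, a nonzero vector of the null space. On the support `S` of `x̃`,
`|x̃ᵢ + wᵢ| ≥ |x̃ᵢ| + sign(x̃ᵢ) wᵢ`, and off `S`, `|x̃ᵢ + wᵢ| = |wᵢ|`; summing,
`‖x‖₁ ≥ ‖x̃‖₁ + Σ_{i∈S} sign(x̃ᵢ) wᵢ + Σ_{i∉S} |wᵢ|`, and the null-space condition makes the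
last two terms positive.
-/

open Finset

theorem Real.abs_add_sign_mul_le_abs_add (a w : ℝ) : |a| + Real.sign a * w ≤ |a + w| := by
  rcases lt_trichotomy a 0 with ha | rfl | ha
  · rw [Real.sign_of_neg ha, abs_of_neg ha]
    linarith [neg_abs_le (a + w)]
  · simp
  · rw [Real.sign_of_pos ha, abs_of_pos ha]
    linarith [le_abs_self (a + w)]

theorem sum_abs_add_sign_mul_le_sum_abs_add {ι : Type*} [Fintype ι] [DecidableEq ι]
    (x w : ι → ℝ) (S : Finset ι) (hS : ∀ i ∉ S, x i = 0) :
    ∑ i, |x i| + (∑ i ∈ S, Real.sign (x i) * w i + ∑ i ∈ Sᶜ, |w i|) ≤ ∑ i, |x i + w i| := by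
  have supp : ∑ i, |x i| = ∑ i ∈ S, |x i| := by
    refine (sum_subset (subset_univ S) fun i _ hi => ?_).symm
    rw [hS i hi, abs_zero]
  have on_S : ∑ i ∈ S, (|x i| + Real.sign (x i) * w i) ≤ ∑ i ∈ S, |x i + w i| :=
    sum_le_sum fun i _ => Real.abs_add_sign_mul_le_abs_add (x i) (w i)
  have off_S : ∑ i ∈ Sᶜ, |w i| = ∑ i ∈ Sᶜ, |x i + w i| :=
    sum_congr rfl fun i hi => by rw [hS i (mem_compl.mp hi), zero_add]
  rw [sum_add_distrib] at on_S
  rw [supp, ← sum_add_sum_compl S fun i => |x i + w i|, ← off_S]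
  linarith

/-- If for every nonzero w in the null space of A,
|Σ_{i∈S} sign(x̃ᵢ) wᵢ| < Σ_{i∉S} |wᵢ| where S is the support of x̃, then x̃ is the
unique minimizer of ‖x‖₁ subject to Ax = Ax̃. -/
theorem stmt14 (m n : ℕ) (A : Matrix (Fin m) (Fin n) ℝ) (xt : Fin n → ℝ)
    (S : Finset (Fin n)) (hS : S = Finset.univ.filter (fun i => xt i ≠ 0))
    (hns : ∀ w : Fin n → ℝ, A.mulVec w = 0 → w ≠ 0 →
      |∑ i ∈ S, Real.sign (xt i) * w i| < ∑ i ∈ Sᶜ, |w i|) :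
    ∀ x : Fin n → ℝ, A.mulVec x = A.mulVec xt → x ≠ xt →
      ∑ i, |xt i| < ∑ i, |x i| := by
  intro x hAx hne
  set w := x - xt
  have hnull : A.mulVec w = 0 := by rw [Matrix.mulVec_sub, hAx, sub_self]
  have hxt_off : ∀ i ∉ S, xt i = 0 := fun i hi => by simpa [hS] using hi
  have hgain : 0 < ∑ i ∈ S, Real.sign (xt i) * w i + ∑ i ∈ Sᶜ, |w i| := by
    linarith [neg_abs_le (∑ i ∈ S, Real.sign (xt i) * w i), hns w hnull (sub_ne_zero.mpr hne)]
  calc ∑ i, |xt i|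
      < ∑ i, |xt i| + (∑ i ∈ S, Real.sign (xt i) * w i + ∑ i ∈ Sᶜ, |w i|) :=
        lt_add_of_pos_right _ hgain
    _ ≤ ∑ i, |xt i + w i| := sum_abs_add_sign_mul_le_sum_abs_add xt w S hxt_off
    _ = ∑ i, |x i| := by simp [w]
end
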